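/- Suppose 3 does not divide P, and let δ = ord_3(P^2 + 2). Then for all k ≥ δ and all natural numbers n, u_{n + 4·3^(k−δ)} ≡ −u_n (mod 3^k). -/
import Mathlib

def u (P : ℤ) : ℕ → ℤ
  | 0 => 0
  | 1 => 1
  | n + 2 => P * u P (n + 1) + u P n

def v (P : ℤ) : ℕ → ℤ
  | 0 => 2
  | 1 => P
  | n + 2 => P * v P (n + 1) + v P n

lemma u_rec (P : ℤ) (n : ℕ) : u P (n + 2) = P * u P (n + 1) + u P n := rfl

lemma u_add (P : ℤ) (m n : ℕ) :
    u P (m + n + 1) = u P (m + 1) * u P (n + 1) + u P m * u P n := by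
  induction n using Nat.twoStepInduction with
  | zero => simp [u]
  | one => show u P (m + 2) = _; rw [u_rec]; simp [u]; ring
  | more n ih1 ih2 =>
      have h3 : u P (n + 3) = P * u P (n + 2) + u P (n + 1) := u_rec P (n + 1)
      have h2 : u P (n + 2) = P * u P (n + 1) + u P n := u_rec P n
      have hr : u P (m + n + 3) = P * u P (m + n + 2) + u P (m + n + 1) := u_rec P (m + n + 1)
      rw [show m + (n + 1) + 1 = m + n + 2 by omega, show n + 1 + 1 = n + 2 by omega] at ih2
      rw [show m + (n + 2) + 1 = m + n + 3 by omega, show n + 2 + 1 = n + 3 by omega]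
      linear_combination hr + P * ih2 + ih1 - u P (m + 1) * h3 - u P m * h2

lemma zmod3 : ∀ x : ZMod 3, x ≠ 0 → x ^ 2 + 2 = 0 := by decide

lemma key (P Q : ℤ) (hQ : P ^ 2 + 2 = 3 * Q) (j : ℕ) :
    ∃ a b : ℤ, u P (4 * 3 ^ j) = 3 * Q * 3 ^ j * a ∧
      u P (4 * 3 ^ j + 1) = -1 + 3 * Q * 3 ^ j * b := by
  induction j with
  | zero =>
      refine ⟨P, P ^ 2 + 1, ?_, ?_⟩
      · show u P 4 = _
        simp only [u]
        push_cast
        linear_combination P * hQ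
      · show u P 5 = _
        simp only [u]
        push_cast
        linear_combination (P ^ 2 + 1) * hQ
  | succ j ih =>
      obtain ⟨a, b, hX, hY⟩ := ih
      set m := 4 * 3 ^ j with hm
      set X := u P m with hXd
      set Y := u P (m + 1) with hYd
      -- intermediate values
      have hm2 : u P (m + 2) = P * Y + X := u_rec P m
      have h1 : u P (2 * m + 1) = Y ^ 2 + X ^ 2 := by
        have := u_add P m m
        rw [show m + m + 1 = 2 * m + 1 by omega] at this
        rw [this]; ring
      have h2 : u P (2 * m + 2) = P * Y ^ 2 + 2 * X * Y := by
        have := u_add P (m + 1) m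
        rw [show m + 1 + m + 1 = 2 * m + 2 by omega] at this
        rw [this, hm2]; ring
      have h0 : u P (2 * m) = 2 * X * Y - P * X ^ 2 := by
        have hr : u P (2 * m + 2) = P * u P (2 * m + 1) + u P (2 * m) := u_rec P (2 * m)
        rw [h1, h2] at hr
        linarith [hr]
      have h4 : u P (3 * m + 1) = Y ^ 3 + 3 * X ^ 2 * Y - P * X ^ 3 := by
        have := u_add P (2 * m) m
        rw [show 2 * m + m + 1 = 3 * m + 1 by omega] at this
        rw [this, h1, h0]; ring
      have h5 : u P (3 * m + 2) = P * Y ^ 3 + 3 * X * Y ^ 2 + X ^ 3 := by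
        have := u_add P (2 * m + 1) m
        rw [show 2 * m + 1 + m + 1 = 3 * m + 2 by omega] at this
        rw [this, h1, h2]; ring
      have h6 : u P (3 * m) = 3 * X * Y ^ 2 - 3 * P * X ^ 2 * Y + (1 + P ^ 2) * X ^ 3 := by
        have hr : u P (3 * m + 2) = P * u P (3 * m + 1) + u P (3 * m) := u_rec P (3 * m)
        rw [h4, h5] at hr
        linarith [hr]
      refine ⟨a * (Y ^ 2 - P * X * Y) + (1 + P ^ 2) * (3 * Q ^ 2 * 3 ^ j * 3 ^ j) * a ^ 3,
        b - 3 * Q * 3 ^ j * b ^ 2 + 3 * Q ^ 2 * 3 ^ j * 3 ^ j * b ^ 3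
          + 3 * Q * 3 ^ j * a ^ 2 * Y - P * (3 * Q ^ 2 * 3 ^ j * 3 ^ j) * a ^ 3, ?_, ?_⟩
      · rw [show 4 * 3 ^ (j + 1) = 3 * m by rw [hm]; ring, h6, hX]
        ring
      · rw [show 4 * 3 ^ (j + 1) + 1 = 3 * m + 1 by rw [hm]; ring, h4, hX, hY]
        ring

theorem u_half_period (P : ℤ) (hP : ¬ (3 ∣ P)) (k : ℕ)
    (hk : padicValInt 3 (P ^ 2 + 2) ≤ k) (n : ℕ) :
    u P (n + 4 * 3 ^ (k - padicValInt 3 (P ^ 2 + 2))) ≡ -u P n [ZMOD (3 : ℤ) ^ k] := by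
  have hfact : Fact (Nat.Prime 3) := ⟨by norm_num⟩
  set δ := padicValInt 3 (P ^ 2 + 2) with hδ
  -- 3 ∣ P^2 + 2
  have h3 : (3 : ℤ) ∣ P ^ 2 + 2 := by
    have hPz : ((P : ZMod 3)) ≠ 0 := by
      intro h
      exact hP ((ZMod.intCast_zmod_eq_zero_iff_dvd P 3).mp h)
    have : ((P ^ 2 + 2 : ℤ) : ZMod 3) = 0 := by
      push_cast
      exact zmod3 _ hPz
    exact (ZMod.intCast_zmod_eq_zero_iff_dvd _ 3).mp this
  obtain ⟨Q, hQ⟩ := h3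
  -- 3^δ ∣ P^2 + 2
  have hdvd : (3 : ℤ) ^ δ ∣ P ^ 2 + 2 := by
    have := padicValInt_dvd (p := 3) (P ^ 2 + 2)
    exact_mod_cast this
  obtain ⟨s, hs⟩ := hdvd
  obtain ⟨a, b, hX, hY⟩ := key P Q hQ (k - δ)
  set T := 4 * 3 ^ (k - δ) with hT
  -- 3^k divides the scale factor
  have hpow : (3 : ℤ) ^ δ * 3 ^ (k - δ) = 3 ^ k := by
    rw [← pow_add]
    congr 1
    omega
  have hscale : (3 : ℤ) * Q * 3 ^ (k - δ) = 3 ^ k * s := by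
    linear_combination (3 : ℤ) ^ (k - δ) * hs - (3 : ℤ) ^ (k - δ) * hQ + s * hpow
  have hT0 : u P T = 3 ^ k * (s * a) := by rw [hX, hscale]; ring
  have hT1 : u P (T + 1) = -1 + 3 ^ k * (s * b) := by rw [hY, hscale]; ring
  refine Int.modEq_iff_dvd.mpr ?_
  cases n with
  | zero =>
      refine ⟨-(s * a), ?_⟩
      rw [show (0 : ℕ) + T = T from by omega, hT0]
      simp [u]
  | succ n' =>
      have hadd := u_add P T n'
      rw [show T + n' + 1 = n' + 1 + T by omega] at hadd
      refine ⟨-(s * b) * u P (n' + 1) - s * a * u P n', ?_⟩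
      rw [hadd, hT0, hT1]
      ring
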